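/- Let q be a prime and e ≥ 1. Then the order of the abelianization of SL_2(ℤ/q^e ℤ) is a power of q. -/

import Mathlib

/-!
Since `ZMod (q ^ e)` is a quotient of the local ring `ℤ_[q]`, it is local, so in every matrix of
`SL₂(ZMod (q ^ e))` one of the entries of the first column is a unit, and such a matrix is a
product of at most four elementary transvections. A transvection `t(b)` satisfies `t(b) ^ n = t(n • b)`, so it
is killed by `q ^ e`. Hence the abelianization is a commutative group generated by elements of
`q`-power order, i.e. a `q`-group.
-/

open Matrix MatrixGroups

theorem Abelianization.isPGroup_of_closure_eq_top {G : Type*} [Group G] {p : ℕ} {S : Set G}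
    (hS : Subgroup.closure S = ⊤) (hSp : ∀ g ∈ S, ∃ k : ℕ, g ^ p ^ k = 1) :
    IsPGroup p (Abelianization G) := by
  have hle : (⊤ : Subgroup (Abelianization G)) ≤ CommGroup.primaryComponent _ p := by
    rw [← (MonoidHom.range_eq_top (f := Abelianization.of)).mpr QuotientGroup.mk_surjective,
      MonoidHom.range_eq_map, ← hS, MonoidHom.map_closure, Subgroup.closure_le]
    rintro _ ⟨g, hg, rfl⟩
    obtain ⟨k, hk⟩ := hSp g hg
    exact ⟨k, by rw [← map_pow, hk, map_one]⟩
  exact fun x => hle (Subgroup.mem_top x)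

theorem ZMod.isLocalRing_prime_pow {q : ℕ} [Fact q.Prime] {e : ℕ} (he : e ≠ 0) :
    IsLocalRing (ZMod (q ^ e)) :=
  have : Fact (1 < q ^ e) := ⟨Nat.one_lt_pow he (Fact.out : q.Prime).one_lt⟩
  .of_surjective' (PadicInt.toZModPow e) (ZMod.ringHom_surjective _)

namespace Matrix.SpecialLinearGroup

section General

variable (ι R : Type*) [Fintype ι] [DecidableEq ι] [CommRing R]

def elementarySubgroup : Subgroup (SpecialLinearGroup ι R) :=
  Subgroup.closure (Set.range TransvectionStruct.toSpecialLinearGroup)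

variable {ι R}

theorem transvection_mem_elementarySubgroup {i j : ι} (hij : i ≠ j) (b : R) :
    transvection hij b ∈ elementarySubgroup ι R :=
  Subgroup.subset_closure ⟨⟨i, j, hij, b⟩, rfl⟩

theorem transvection_pow {i j : ι} (hij : i ≠ j) (b : R) (n : ℕ) :
    transvection hij b ^ n = transvection hij (n • b) := by
  induction n with
  | zero => simp
  | succ n ih => rw [pow_succ, ih, ← transvection_add, succ_nsmul]

end General

variable {R : Type*} [CommRing R]

theorem eq_transvection_mul_transvection_mul_transvection (M : SL(2, R)) {x : R}
    (hx : M 1 0 * x = 1) :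
    M = transvection (zero_ne_one' (Fin 2)) ((M 0 0 - 1) * x) *
      transvection (one_ne_zero' (Fin 2)) (M 1 0) *
      transvection (zero_ne_one' (Fin 2)) ((M 1 1 - 1) * x) := by
  have hdet : M 0 0 * M 1 1 - M 0 1 * M 1 0 = 1 := by rw [← det_fin_two]; exact M.det_coe
  ext i j
  fin_cases i <;> fin_cases j <;> simp [transvection_coe, Matrix.mul_apply, Fin.sum_univ_two]
  · linear_combination (1 - M 0 0) * hx
  · linear_combination (-x) * hdet + (-M 0 1 - (M 0 0 - 1) * (M 1 1 - 1) * x) * hx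
  · linear_combination (1 - M 1 1) * hx

theorem mem_elementarySubgroup_of_isUnit_apply_one_zero {M : SL(2, R)} (hM : IsUnit (M 1 0)) :
    M ∈ elementarySubgroup (Fin 2) R := by
  obtain ⟨c, hc⟩ := hM
  rw [eq_transvection_mul_transvection_mul_transvection M (x := ↑c⁻¹) (by rw [← hc]; simp)]
  exact mul_mem (mul_mem (transvection_mem_elementarySubgroup _ _)
    (transvection_mem_elementarySubgroup _ _)) (transvection_mem_elementarySubgroup _ _)

theorem mem_elementarySubgroup_of_isUnit_apply_zero_zero {M : SL(2, R)} (hM : IsUnit (M 0 0)) :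
    M ∈ elementarySubgroup (Fin 2) R := by
  obtain ⟨a, ha⟩ := hM
  set t := transvection (one_ne_zero' (Fin 2)) ((1 - M 1 0) * ↑a⁻¹)
  have htM : (t * M) 1 0 = 1 := by
    simp [t, transvection_coe, Matrix.mul_apply, Fin.sum_univ_two, ← ha]
  have hM : M = t⁻¹ * (t * M) := (inv_mul_cancel_left t M).symm
  rw [hM, transvection_inv]
  exact mul_mem (transvection_mem_elementarySubgroup _ _)
    (mem_elementarySubgroup_of_isUnit_apply_one_zero (by rw [htM]; exact isUnit_one))

theorem elementarySubgroup_eq_top [IsLocalRing R] : elementarySubgroup (Fin 2) R = ⊤ := by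
  refine eq_top_iff.mpr fun M _ => ?_
  have hdet : M 0 0 * M 1 1 + -(M 0 1 * M 1 0) = 1 := by
    rw [← sub_eq_add_neg, ← det_fin_two]; exact M.det_coe
  rcases IsLocalRing.isUnit_or_isUnit_of_isUnit_add (hdet ▸ isUnit_one) with had | hbc
  · exact mem_elementarySubgroup_of_isUnit_apply_zero_zero (isUnit_of_mul_isUnit_left had)
  · exact mem_elementarySubgroup_of_isUnit_apply_one_zero
      (isUnit_of_mul_isUnit_right (IsUnit.neg_iff _ |>.mp hbc))

theorem isPGroup_abelianization [IsLocalRing R] {p k : ℕ} (hR : ((p ^ k : ℕ) : R) = 0) :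
    IsPGroup p (Abelianization SL(2, R)) := by
  refine Abelianization.isPGroup_of_closure_eq_top elementarySubgroup_eq_top ?_
  rintro _ ⟨⟨i, j, hij, b⟩, rfl⟩
  exact ⟨k, by simp [TransvectionStruct.toSpecialLinearGroup_mk, transvection_pow, hR]⟩

end Matrix.SpecialLinearGroup

/-- For a prime `q` and `e ≥ 1`, the order of the abelianization of `SL₂(ℤ/qᵉℤ)` is a
power of `q`. -/
theorem stmt_8 (q e : ℕ) (hq : q.Prime) (he : 1 ≤ e) :
    ∃ k : ℕ, Nat.card (Abelianization (Matrix.SpecialLinearGroup (Fin 2) (ZMod (q ^ e)))) =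
      q ^ k := by
  have : Fact q.Prime := ⟨hq⟩
  have := ZMod.isLocalRing_prime_pow (q := q) (e := e) (by omega)
  exact (Matrix.SpecialLinearGroup.isPGroup_abelianization (ZMod.natCast_self _)).exists_card_eq
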